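/- Consider a single externality class and separable, piecewise affine, continuous, strictly increasing edge cost functions c^λ_e(x_e) = a_{e,k}·x_e + b_{e,k} + g_e·λ for x_e ∈ [σ_{e,k}, σ_{e,k+1}). For λ ≥ 0 let x_e(λ) denote the unique equilibrium edge loads and φ_{i,v}(λ) the shortest s_i–v distance with respect to edge lengths c^λ_e(x_e(λ)). Define the active support S(λ) = {(i, e) : e = (v,w) ∈ E, c^λ_e(x_e(λ)) = φ_{i,w}(λ) − φ_{i,v}(λ)}, the active function parts ℓ(λ) ∈ {0,…,K}^E by x_e(λ) ∈ [σ_{e,ℓ(λ)_e}, σ_{e,ℓ(λ)_e+1}), and the edge state 𝒮(λ) = (S(λ), ℓ(λ)). Then for every edge state 𝒮 = (S, ℓ), the set Λ(𝒮) = {λ ≥ 0 : 𝒮(λ) = 𝒮} is convex. -/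

import Mathlib

open Finset

variable {V : Type*} [Fintype V] [DecidableEq V] {I : Type*} [Fintype I]

/-- `l` is (the vertex list of) a simple directed path from `a` to `b` using edges
from `Eset`. -/
def IsPath (Eset : Finset (V × V)) (a b : V) (l : List V) : Prop :=
  l.head? = some a ∧ l.getLast? = some b ∧ l.Nodup ∧ l.Chain' (fun u v => (u, v) ∈ Eset)

noncomputable instance pathFintype (Eset : Finset (V × V)) (a b : V) :
    Fintype {l : List V // IsPath Eset a b l} :=
  Fintype.ofInjective
    (fun p : {l : List V // IsPath Eset a b l} =>
      (⟨p.1, p.2.2.2.1⟩ : {l : List V // l.Nodup}))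
    (by intro p q h; apply Subtype.ext; simpa using h)

/-- The (directed) edges traversed by a path given as a vertex list. -/
def pathEdges (l : List V) : List (V × V) := l.zip l.tail

/-- A flow is feasible if it is nonnegative and satisfies all demands. -/
def Feasible {Eset : Finset (V × V)} {s t : I → V} (d : I → ℝ)
    (x : ∀ i, {l : List V // IsPath Eset (s i) (t i) l} → ℝ) : Prop :=
  (∀ i p, 0 ≤ x i p) ∧ ∀ i, ∑ p, x i p = d i

/-- The flow of commodity `i` on edge `e`: `x_{i,e} = ∑_{p ∋ e} x_{i,p}`. -/
noncomputable def commEdgeFlow {Eset : Finset (V × V)} {s t : I → V}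
    (x : ∀ i, {l : List V // IsPath Eset (s i) (t i) l} → ℝ) (i : I) (e : V × V) : ℝ :=
  ∑ p, if e ∈ pathEdges p.1 then x i p else 0

/-- The load of edge `e`: `x_e = ∑_i x_{i,e}`. -/
noncomputable def edgeLoad {Eset : Finset (V × V)} {s t : I → V}
    (x : ∀ i, {l : List V // IsPath Eset (s i) (t i) l} → ℝ) (e : V × V) : ℝ :=
  ∑ i, commEdgeFlow x i e

/-- The separable cost of a path: `c^λ_{i,p}(x) = ∑_{e∈p} c^λ_e(x_e)`. -/
noncomputable def pathCost {Eset : Finset (V × V)} {s t : I → V} (c : V × V → ℝ → ℝ)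
    (x : ∀ i, {l : List V // IsPath Eset (s i) (t i) l} → ℝ) (l : List V) : ℝ :=
  ((pathEdges l).map (fun e => c e (edgeLoad x e))).sum

/-- Wardrop equilibrium with respect to the separable edge costs `c`. -/
def IsWardrop {Eset : Finset (V × V)} {s t : I → V} (d : I → ℝ) (c : V × V → ℝ → ℝ)
    (x : ∀ i, {l : List V // IsPath Eset (s i) (t i) l} → ℝ) : Prop :=
  Feasible d x ∧
    ∀ i (p : {l : List V // IsPath Eset (s i) (t i) l}), 0 < x i p →
      ∀ q : {l : List V // IsPath Eset (s i) (t i) l},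
        pathCost c x p.1 ≤ pathCost c x q.1

/-- The cost of a path with respect to fixed edge loads. -/
def pathCostOfLoads (c : V × V → ℝ → ℝ) (load : V × V → ℝ) (l : List V) : ℝ :=
  ((pathEdges l).map (fun e => c e (load e))).sum

/-- The shortest-path distance from `a` to `v` with respect to the edge lengths
`e ↦ c_e(load_e)`, valued in `EReal` (`⊤` if `v` is not reachable from `a`). -/
noncomputable def shortestDist (Eset : Finset (V × V)) (c : V × V → ℝ → ℝ)
    (load : V × V → ℝ) (a v : V) : EReal :=
  sInf {r : EReal | ∃ l : List V, IsPath Eset a v l ∧ r = (pathCostOfLoads c load l : ℝ)}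

/-- The active support: pairs `(i, e)` with `e = (v,w) ∈ E` such that
`c_e(x_e) = φ_{i,w} − φ_{i,v}`, i.e. `e` lies on a shortest path for commodity `i`. -/
noncomputable def activeSupport (Eset : Finset (V × V)) (s : I → V)
    (c : V × V → ℝ → ℝ) (load : V × V → ℝ) : Set (I × (V × V)) :=
  {ie | ie.2 ∈ Eset ∧
    (c ie.2 (load ie.2) : EReal) =
      shortestDist Eset c load (s ie.1) ie.2.2 - shortestDist Eset c load (s ie.1) ie.2.1}

/-!
Let `λ₁, λ₂ ∈ Λ(𝒮)` and `λ = θ₁ λ₁ + θ₂ λ₂`. On every edge both equilibrium loads lie in the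
same affine piece `ℓ_e`, and `c^λ_e(x_e)` is affine in `(λ, x_e)` there, so the combined loads
`θ₁ x(λ₁) + θ₂ x(λ₂)` have costs `θ₁ c^{λ₁}_e(x_e(λ₁)) + θ₂ c^{λ₂}_e(x_e(λ₂))` at `λ`.

With nonnegative edge lengths a path is shortest iff all its edges are active, so equal active
supports give equal sets of shortest paths at `λ₁` and `λ₂`. These paths are then shortest for
the combined costs as well: the combined flow is a Wardrop equilibrium at `λ`, whence its loads
are `x(λ)` by uniqueness, and the distances at `λ` are the same combination of the distances at
`λ₁` and `λ₂`. An edge is active at `λ` iff the combination of the triangle inequalities at `λ₁`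
and `λ₂` is tight, i.e. iff it is active at `λ₁` (equivalently at `λ₂`); so `S(λ) = S`.
-/

section Paths

variable {α : Type*}

lemma pathEdges_cons_cons (x y : α) (l : List α) :
    pathEdges (x :: y :: l) = (x, y) :: pathEdges (y :: l) := rfl

lemma pathEdges_append_cons (l₁ l₂ : List α) (w : α) :
    pathEdges (l₁ ++ w :: l₂) = pathEdges (l₁ ++ [w]) ++ pathEdges (w :: l₂) := by
  induction l₁ with
  | nil => rfl
  | cons x r ih =>
    cases r with
    | nil => rfl
    | cons y r =>
      simp only [List.cons_append, pathEdges_cons_cons] at ih ⊢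
      rw [ih]

lemma pathEdges_concat {l : List α} {u : α} (hu : l.getLast? = some u) (w : α) :
    pathEdges (l ++ [w]) = pathEdges l ++ [(u, w)] := by
  rw [← List.dropLast_append_getLast? u hu, List.append_assoc, List.singleton_append,
    pathEdges_append_cons]
  rfl

lemma pathEdges_nodup {l : List α} (h : l.Nodup) : (pathEdges l).Nodup := by
  refine List.Nodup.of_map Prod.snd ?_
  rw [pathEdges, List.map_snd_zip (by simp)]
  exact h.sublist (List.tail_sublist l)

lemma List.IsChain.rel_of_mem_pathEdges {R : α → α → Prop} :
    ∀ {l : List α}, l.IsChain R → ∀ {e : α × α}, e ∈ pathEdges l → R e.1 e.2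
  | [], _, _, he | [_], _, _, he => by simp [pathEdges] at he
  | x :: y :: r, hch, e, he => by
    rw [pathEdges_cons_cons, List.mem_cons] at he
    rw [List.isChain_cons_cons] at hch
    rcases he with rfl | he
    exacts [hch.1, hch.2.rel_of_mem_pathEdges he]

variable {Eset : Finset (α × α)} {a v w z : α} {l : List α}

lemma IsPath.mem_of_mem_pathEdges (hl : IsPath Eset a z l) {e : α × α}
    (he : e ∈ pathEdges l) : e ∈ Eset :=
  hl.2.2.2.rel_of_mem_pathEdges he

lemma IsPath.of_append_singleton {u : α} (h : IsPath Eset a z (l ++ [w]))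
    (hu : l.getLast? = some u) : IsPath Eset a u l ∧ (u, w) ∈ Eset ∧ z = w := by
  obtain ⟨hh, hlast, hnd, hch⟩ := h
  obtain ⟨hch₁, -, hR⟩ := List.isChain_append.1 hch
  have hne : l ≠ [] := by rintro rfl; simp at hu
  refine ⟨⟨?_, hu, hnd.sublist (List.sublist_append_left l [w]), hch₁⟩, hR u hu w rfl, ?_⟩
  · rwa [List.head?_append_of_ne_nil _ hne] at hh
  · simpa [eq_comm] using hlast

lemma IsPath.append_singleton (h : IsPath Eset a v l) (he : (v, w) ∈ Eset) (hw : w ∉ l) :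
    IsPath Eset a w (l ++ [w]) := by
  obtain ⟨hh, hlast, hnd, hch⟩ := h
  have hne : l ≠ [] := by rintro rfl; simp at hh
  refine ⟨by rwa [List.head?_append_of_ne_nil _ hne], List.getLast?_concat, ?_, ?_⟩
  · exact List.nodup_append.2 ⟨hnd, List.nodup_singleton w, by
      intro x hx y hy hxy
      rw [List.mem_singleton] at hy
      subst hy hxy
      exact hw hx⟩
  · refine List.isChain_append.2 ⟨hch, List.isChain_singleton w, ?_⟩
    simp_all

lemma IsPath.prefix {l₂ : List α} (h : IsPath Eset a v (l ++ w :: l₂)) :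
    IsPath Eset a w (l ++ [w]) := by
  have hpre : l ++ [w] <+: l ++ w :: l₂ := ⟨l₂, by simp⟩
  obtain ⟨hh, -, hnd, hch⟩ := h
  refine ⟨?_, List.getLast?_concat, hnd.sublist hpre.sublist, hch.prefix hpre⟩
  cases l <;> simpa using hh

end Paths

section ShortestPaths

variable {α ι : Type*} {Eset : Finset (α × α)} {cc : α × α → ℝ → ℝ} {load : α × α → ℝ}
  {a v w z : α} {l l' : List α} {c₁ c₂ c : α × α → ℝ → ℝ} {load₁ load₂ : α × α → ℝ} {θ₁ θ₂ : ℝ}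

def IsShortestPath (Eset : Finset (α × α)) (cc : α × α → ℝ → ℝ) (load : α × α → ℝ)
    (a z : α) (l : List α) : Prop :=
  IsPath Eset a z l ∧
    ∀ l', IsPath Eset a z l' → pathCostOfLoads cc load l ≤ pathCostOfLoads cc load l'

lemma pathCostOfLoads_append_cons (l₁ l₂ : List α) (w : α) :
    pathCostOfLoads cc load (l₁ ++ w :: l₂) =
      pathCostOfLoads cc load (l₁ ++ [w]) + pathCostOfLoads cc load (w :: l₂) := by
  unfold pathCostOfLoads
  rw [pathEdges_append_cons, List.map_append, List.sum_append]

lemma pathCostOfLoads_concat {u : α} (hu : l.getLast? = some u) (w : α) :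
    pathCostOfLoads cc load (l ++ [w]) = pathCostOfLoads cc load l + cc (u, w) (load (u, w)) := by
  simp [pathCostOfLoads, pathEdges_concat hu]

lemma pathCostOfLoads_nonneg (h : ∀ e ∈ pathEdges l, 0 ≤ cc e (load e)) :
    0 ≤ pathCostOfLoads cc load l :=
  List.sum_nonneg fun _ hr => by
    obtain ⟨e, he, rfl⟩ := List.mem_map.1 hr
    exact h e he

lemma exists_isShortestPath [Fintype α] [DecidableEq α] (hl : IsPath Eset a z l) :
    ∃ l', IsShortestPath Eset cc load a z l' := by
  have : Nonempty {l // IsPath Eset a z l} := ⟨⟨l, hl⟩⟩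
  obtain ⟨⟨l', hl'⟩, hmin⟩ :=
    Finite.exists_min fun p : {l // IsPath Eset a z l} => pathCostOfLoads cc load p.1
  exact ⟨l', hl', fun l'' hl'' => hmin ⟨l'', hl''⟩⟩

lemma IsShortestPath.shortestDist_eq (h : IsShortestPath Eset cc load a z l) :
    shortestDist Eset cc load a z = pathCostOfLoads cc load l :=
  le_antisymm (sInf_le ⟨l, h.1, rfl⟩) <| le_sInf <| by
    rintro _ ⟨l', hl', rfl⟩
    exact EReal.coe_le_coe_iff.2 (h.2 l' hl')

lemma shortestDist_eq_top (h : ∀ l, ¬ IsPath Eset a z l) : shortestDist Eset cc load a z = ⊤ :=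
  sInf_eq_top.2 fun _ ⟨l, hl, _⟩ => absurd hl (h l)

lemma mem_activeSupport_iff_of_isShortestPath {s : ι → α} {i : ι} {e : α × α}
    (hv : IsShortestPath Eset cc load (s i) e.1 l) (hw : IsShortestPath Eset cc load (s i) e.2 l') :
    (i, e) ∈ activeSupport Eset s cc load ↔
      e ∈ Eset ∧ pathCostOfLoads cc load l' = pathCostOfLoads cc load l + cc e (load e) := by
  simp only [activeSupport, Set.mem_ofPred_eq, hv.shortestDist_eq, hw.shortestDist_eq,
    ← EReal.coe_sub, EReal.coe_eq_coe_iff]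
  exact and_congr_right fun _ => by constructor <;> intro h <;> linarith

lemma exists_isPath_of_mem_activeSupport {s : ι → α} {i : ι} {e : α × α}
    (h : (i, e) ∈ activeSupport Eset s cc load) : ∃ l, IsPath Eset (s i) e.1 l := by
  by_contra! hno
  have htight := h.2
  rw [shortestDist_eq_top hno, EReal.sub_top] at htight
  exact EReal.coe_ne_bot _ htight

lemma pathCostOfLoads_convexComb
    (hcomb : ∀ e ∈ pathEdges l, c e (load e) = θ₁ * c₁ e (load₁ e) + θ₂ * c₂ e (load₂ e)) :
    pathCostOfLoads c load l =
      θ₁ * pathCostOfLoads c₁ load₁ l + θ₂ * pathCostOfLoads c₂ load₂ l := by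
  unfold pathCostOfLoads
  rw [List.map_congr_left hcomb, List.sum_map_add, List.sum_map_mul_left, List.sum_map_mul_left]

lemma IsShortestPath.convexComb (h₁ : IsShortestPath Eset c₁ load₁ a z l)
    (h₂ : IsShortestPath Eset c₂ load₂ a z l) (hθ₁ : 0 ≤ θ₁) (hθ₂ : 0 ≤ θ₂)
    (hcomb : ∀ e ∈ Eset, c e (load e) = θ₁ * c₁ e (load₁ e) + θ₂ * c₂ e (load₂ e)) :
    IsShortestPath Eset c load a z l := by
  have hcost {l'} (hl' : IsPath Eset a z l') := pathCostOfLoads_convexComb (l := l')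
    fun e he => hcomb e (hl'.mem_of_mem_pathEdges he)
  refine ⟨h₁.1, fun l' hl' => ?_⟩
  rw [hcost h₁.1, hcost hl']
  gcongr
  exacts [h₁.2 l' hl', h₂.2 l' hl']

variable (hnn : ∀ e ∈ Eset, 0 ≤ cc e (load e))
include hnn

lemma IsPath.exists_cost_le_add (hl : IsPath Eset a v l) (he : (v, w) ∈ Eset) :
    ∃ l', IsPath Eset a w l' ∧
      pathCostOfLoads cc load l' ≤ pathCostOfLoads cc load l + cc (v, w) (load (v, w)) := by
  by_cases hw : w ∈ l
  · obtain ⟨l₁, l₂, rfl⟩ := List.append_of_mem hw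
    refine ⟨_, hl.prefix, ?_⟩
    have hsuffix : 0 ≤ pathCostOfLoads cc load (w :: l₂) :=
      pathCostOfLoads_nonneg fun e he' => hnn e <| hl.mem_of_mem_pathEdges <| by
        rw [pathEdges_append_cons]; exact List.mem_append_right _ he'
    rw [pathCostOfLoads_append_cons l₁ l₂ w]
    linarith [hnn _ he]
  · exact ⟨_, hl.append_singleton he hw, (pathCostOfLoads_concat hl.2.1 w).le⟩

lemma IsShortestPath.cost_le_add (hv : IsShortestPath Eset cc load a v l)
    (hw : IsShortestPath Eset cc load a w l') (he : (v, w) ∈ Eset) :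
    pathCostOfLoads cc load l' ≤ pathCostOfLoads cc load l + cc (v, w) (load (v, w)) :=
  let ⟨_, hl'', hle⟩ := hv.1.exists_cost_le_add hnn he
  (hw.2 _ hl'').trans hle

lemma IsShortestPath.of_append_singleton {u : α} (h : IsShortestPath Eset cc load a z (l ++ [w]))
    (hu : l.getLast? = some u) : IsShortestPath Eset cc load a u l := by
  obtain ⟨hl, he, rfl⟩ := h.1.of_append_singleton hu
  refine ⟨hl, fun l' hl' => ?_⟩
  obtain ⟨l'', hl'', hle⟩ := hl'.exists_cost_le_add hnn he
  have := h.2 _ hl''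
  rw [pathCostOfLoads_concat hu] at this
  linarith

lemma isShortestPath_iff_forall_mem_activeSupport [Fintype α] [DecidableEq α] {s : ι → α} {i : ι}
    (hl : IsPath Eset (s i) z l) :
    IsShortestPath Eset cc load (s i) z l ↔
      ∀ e ∈ pathEdges l, (i, e) ∈ activeSupport Eset s cc load := by
  induction l using List.reverseRecOn generalizing z with
  | nil => simp [IsPath] at hl
  | append_singleton l w ih =>
    cases hu : l.getLast? with
    | none =>
      obtain rfl := List.getLast?_eq_none_iff.1 hu
      refine iff_of_true ⟨hl, fun l' hl' => ?_⟩ (by simp [pathEdges])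
      calc pathCostOfLoads cc load ([] ++ [w]) = 0 := rfl
        _ ≤ _ := pathCostOfLoads_nonneg fun e he => hnn e (hl'.mem_of_mem_pathEdges he)
    | some u =>
      obtain ⟨hlu, he, rfl⟩ := hl.of_append_singleton hu
      simp only [pathEdges_concat hu, List.mem_append, List.mem_singleton, or_imp, forall_and,
        forall_eq, ← ih hlu]
      constructor
      · intro h
        have hlu' := h.of_append_singleton hnn hu
        exact ⟨hlu', (mem_activeSupport_iff_of_isShortestPath hlu' h).2
          ⟨he, pathCostOfLoads_concat hu z⟩⟩
      · rintro ⟨hlu', hact⟩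
        obtain ⟨L, hL⟩ := exists_isShortestPath (cc := cc) (load := load) hl
        have hcost := ((mem_activeSupport_iff_of_isShortestPath hlu' hL).1 hact).2
        refine ⟨hl, fun l' hl' => ?_⟩
        rw [pathCostOfLoads_concat hu, ← hcost]
        exact hL.2 l' hl'

end ShortestPaths

section ConvexCombination

variable {α ι : Type*} [Fintype α] [DecidableEq α] {Eset : Finset (α × α)} {s : ι → α}
  {c₁ c₂ c : α × α → ℝ → ℝ} {load₁ load₂ load : α × α → ℝ} {θ₁ θ₂ : ℝ} {a z : α} {l : List α}

lemma isShortestPath_iff_of_activeSupport_eq (hnn₁ : ∀ e ∈ Eset, 0 ≤ c₁ e (load₁ e))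
    (hnn₂ : ∀ e ∈ Eset, 0 ≤ c₂ e (load₂ e))
    (hS : activeSupport Eset s c₁ load₁ = activeSupport Eset s c₂ load₂) {i : ι} :
    IsShortestPath Eset c₁ load₁ (s i) z l ↔ IsShortestPath Eset c₂ load₂ (s i) z l := by
  by_cases hl : IsPath Eset (s i) z l
  · rw [isShortestPath_iff_forall_mem_activeSupport hnn₁ hl,
      isShortestPath_iff_forall_mem_activeSupport hnn₂ hl, hS]
  · exact iff_of_false (fun h => hl h.1) (fun h => hl h.1)

lemma activeSupport_convexComb (hnn₁ : ∀ e ∈ Eset, 0 ≤ c₁ e (load₁ e))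
    (hnn₂ : ∀ e ∈ Eset, 0 ≤ c₂ e (load₂ e))
    (hS : activeSupport Eset s c₁ load₁ = activeSupport Eset s c₂ load₂)
    (hθ₁ : 0 < θ₁) (hθ₂ : 0 < θ₂)
    (hcomb : ∀ e ∈ Eset, c e (load e) = θ₁ * c₁ e (load₁ e) + θ₂ * c₂ e (load₂ e)) :
    activeSupport Eset s c load = activeSupport Eset s c₁ load₁ := by
  have hcommon {i : ι} {z : α} {l : List α} (hl : IsPath Eset (s i) z l) : ∃ L,
      IsShortestPath Eset c₁ load₁ (s i) z L ∧ IsShortestPath Eset c₂ load₂ (s i) z L ∧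
        IsShortestPath Eset c load (s i) z L := by
    obtain ⟨L, hL⟩ := exists_isShortestPath (cc := c₁) (load := load₁) hl
    have hL₂ := (isShortestPath_iff_of_activeSupport_eq hnn₁ hnn₂ hS).1 hL
    exact ⟨L, hL, hL₂, hL.convexComb hL₂ hθ₁.le hθ₂.le hcomb⟩
  ext ⟨i, e⟩
  by_cases hreach : e ∈ Eset ∧ ∃ l, IsPath Eset (s i) e.1 l
  swap
  · have hout {c' load'} : (i, e) ∉ activeSupport Eset s c' load' := fun h =>
      hreach ⟨h.1, exists_isPath_of_mem_activeSupport h⟩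
    exact iff_of_false hout hout
  obtain ⟨he, l, hl⟩ := hreach
  obtain ⟨lw, hlw, -⟩ := hl.exists_cost_le_add hnn₁ he
  obtain ⟨Lv, hv₁, hv₂, hvm⟩ := hcommon hl
  obtain ⟨Lw, hw₁, hw₂, hwm⟩ := hcommon hlw
  have h₁₂ : (i, e) ∈ activeSupport Eset s c₁ load₁ ↔ (i, e) ∈ activeSupport Eset s c₂ load₂ := by
    rw [hS]
  rw [mem_activeSupport_iff_of_isShortestPath hv₁ hw₁,
    mem_activeSupport_iff_of_isShortestPath hv₂ hw₂] at h₁₂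
  rw [mem_activeSupport_iff_of_isShortestPath hvm hwm,
    mem_activeSupport_iff_of_isShortestPath hv₁ hw₁,
    pathCostOfLoads_convexComb fun e' he' => hcomb e' (hwm.1.mem_of_mem_pathEdges he'),
    pathCostOfLoads_convexComb fun e' he' => hcomb e' (hvm.1.mem_of_mem_pathEdges he'),
    hcomb e he]
  have htri₁ := hv₁.cost_le_add hnn₁ hw₁ he
  have htri₂ := hv₂.cost_le_add hnn₂ hw₂ he
  simp only [he, true_and] at h₁₂ ⊢
  constructor
  · -- the two triangle inequalities are tight, since their weighted sum is
    intro h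
    nlinarith
  · intro h
    linear_combination θ₁ * h + θ₂ * h₁₂.1 h

end ConvexCombination

lemma StrictMonoOn.sub_mul_sub_pos {f : ℝ → ℝ} {s : Set ℝ} (hf : StrictMonoOn f s) {a b : ℝ}
    (ha : a ∈ s) (hb : b ∈ s) (hab : a ≠ b) : 0 < (f a - f b) * (a - b) := by
  rcases hab.lt_or_gt with h | h
  · exact mul_pos_of_neg_of_neg (sub_neg.2 (hf ha hb h)) (sub_neg.2 h)
  · exact mul_pos (sub_pos.2 (hf hb ha h)) (sub_pos.2 h)

lemma StrictMonoOn.sub_mul_sub_nonneg {f : ℝ → ℝ} {s : Set ℝ} (hf : StrictMonoOn f s) {a b : ℝ}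
    (ha : a ∈ s) (hb : b ∈ s) : 0 ≤ (f a - f b) * (a - b) := by
  rcases eq_or_ne a b with rfl | hab
  · simp
  · exact (hf.sub_mul_sub_pos ha hb hab).le

lemma sum_mul_le_sum_mul_of_pos_imp_le {β : Type*} [Fintype β] {C x z : β → ℝ}
    (hx : ∀ p, 0 ≤ x p) (hz : ∀ p, 0 ≤ z p) (hsum : ∑ p, x p = ∑ p, z p)
    (hmin : ∀ p, 0 < x p → ∀ q, C p ≤ C q) :
    ∑ p, C p * x p ≤ ∑ p, C p * z p := by
  have hpoint : ∀ p q, C p * x p ≤ C q * x p := fun p q => by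
    rcases (hx p).eq_or_lt with h | h
    · simp [← h]
    · exact mul_le_mul_of_nonneg_right (hmin p h q) (hx p)
  have key : (∑ q, z q) * ∑ p, C p * x p ≤ (∑ p, x p) * ∑ q, C q * z q :=
    calc (∑ q, z q) * ∑ p, C p * x p = ∑ q, ∑ p, z q * (C p * x p) := by
          simp_rw [Finset.sum_mul, Finset.mul_sum]
      _ ≤ ∑ q, ∑ p, z q * (C q * x p) :=
          Finset.sum_le_sum fun q _ => Finset.sum_le_sum fun p _ =>
            mul_le_mul_of_nonneg_left (hpoint p q) (hz q)
      _ = (∑ p, x p) * ∑ q, C q * z q := by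
          simp_rw [Finset.sum_mul, Finset.mul_sum]
          rw [Finset.sum_comm]
          exact Finset.sum_congr rfl fun _ _ => Finset.sum_congr rfl fun _ _ => by ring
  rcases (Finset.sum_nonneg fun p _ => hx p).eq_or_lt with h | h
  · have hx0 := (Finset.sum_eq_zero_iff_of_nonneg fun p _ => hx p).1 h.symm
    have hz0 := (Finset.sum_eq_zero_iff_of_nonneg fun p _ => hz p).1 (hsum ▸ h.symm)
    simp [hx0, hz0]
  · rw [hsum] at key h
    exact le_of_mul_le_mul_left key h

lemma Feasible.convexComb {α ι : Type*} [Fintype α] {Eset : Finset (α × α)} {s t : ι → α}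
    {d : ι → ℝ} {x₁ x₂ : ∀ i, {l : List α // IsPath Eset (s i) (t i) l} → ℝ}
    (h₁ : Feasible d x₁) (h₂ : Feasible d x₂) {θ₁ θ₂ : ℝ} (hθ₁ : 0 ≤ θ₁) (hθ₂ : 0 ≤ θ₂)
    (hθ : θ₁ + θ₂ = 1) : Feasible d fun i p => θ₁ * x₁ i p + θ₂ * x₂ i p := by
  refine ⟨fun i p => by have := h₁.1 i p; have := h₂.1 i p; positivity, fun i => ?_⟩
  rw [Finset.sum_add_distrib, ← Finset.mul_sum, ← Finset.mul_sum, h₁.2 i, h₂.2 i]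
  linear_combination d i * hθ

section Flows

variable {Eset : Finset (V × V)} {s t : I → V} {d : I → ℝ} {c c₁ c₂ : V × V → ℝ → ℝ}
  {x x₁ x₂ z : ∀ i, {l : List V // IsPath Eset (s i) (t i) l} → ℝ}

lemma edgeLoad_nonneg (hx : ∀ i p, 0 ≤ x i p) (e : V × V) : 0 ≤ edgeLoad x e :=
  Finset.sum_nonneg fun i _ => Finset.sum_nonneg fun p _ => by
    split_ifs
    exacts [hx i p, le_rfl]

lemma edgeLoad_convexComb (θ₁ θ₂ : ℝ) :
    edgeLoad (fun i p => θ₁ * x₁ i p + θ₂ * x₂ i p) =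
      fun e => θ₁ * edgeLoad x₁ e + θ₂ * edgeLoad x₂ e := by
  ext e
  simp only [edgeLoad, commEdgeFlow, Finset.mul_sum, ← Finset.sum_add_distrib]
  refine Finset.sum_congr rfl fun i _ => Finset.sum_congr rfl fun p _ => ?_
  split_ifs <;> simp

lemma sum_pathCostOfLoads_mul (c : V × V → ℝ → ℝ) (load : V × V → ℝ) :
    ∑ i, ∑ p, pathCostOfLoads c load p.1 * z i p = ∑ e, c e (load e) * edgeLoad z e := by
  have hcost (i : I) (p : {l : List V // IsPath Eset (s i) (t i) l}) :
      pathCostOfLoads c load p.1 = ∑ e, if e ∈ pathEdges p.1 then c e (load e) else 0 := by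
    unfold pathCostOfLoads
    rw [← List.sum_toFinset _ (pathEdges_nodup p.2.2.2.1), ← Finset.sum_filter]
    congr 1
    ext e
    simp
  simp only [hcost, Finset.sum_mul, edgeLoad, commEdgeFlow, Finset.mul_sum]
  rw [Finset.sum_comm]
  refine Finset.sum_congr rfl fun i _ => ?_
  rw [Finset.sum_comm]
  refine Finset.sum_congr rfl fun e _ => Finset.sum_congr rfl fun p _ => ?_
  split_ifs <;> ring

lemma IsWardrop.isShortestPath (hx : IsWardrop d c x) {i : I} {p} (hp : 0 < x i p) :
    IsShortestPath Eset c (edgeLoad x) (s i) (t i) p.1 :=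
  ⟨p.2, fun l hl => hx.2 i p hp ⟨l, hl⟩⟩

lemma IsWardrop.sum_mul_edgeLoad_le (hx : IsWardrop d c x) (hz : Feasible d z) :
    ∑ e, c e (edgeLoad x e) * edgeLoad x e ≤ ∑ e, c e (edgeLoad x e) * edgeLoad z e := by
  rw [← sum_pathCostOfLoads_mul, ← sum_pathCostOfLoads_mul]
  exact Finset.sum_le_sum fun i _ => sum_mul_le_sum_mul_of_pos_imp_le (hx.1.1 i) (hz.1 i)
    ((hx.1.2 i).trans (hz.2 i).symm) fun p hp q => hx.2 i p hp q

lemma IsWardrop.edgeLoad_eq (hmono : ∀ e, StrictMonoOn (c e) (Set.Ici 0))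
    (hx : IsWardrop d c x) (hz : IsWardrop d c z) : edgeLoad x = edgeLoad z := by
  set X := edgeLoad x
  set Z := edgeLoad z
  have hX := edgeLoad_nonneg hx.1.1
  have hZ := edgeLoad_nonneg hz.1.1
  by_contra hne
  obtain ⟨e, he⟩ := Function.ne_iff.1 hne
  have hpos : 0 < ∑ e, (c e (X e) - c e (Z e)) * (X e - Z e) :=
    Finset.sum_pos' (fun e _ => (hmono e).sub_mul_sub_nonneg (hX e) (hZ e))
      ⟨e, Finset.mem_univ e, (hmono e).sub_mul_sub_pos (hX e) (hZ e) he⟩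
  simp only [sub_mul, mul_sub, Finset.sum_sub_distrib] at hpos
  linarith [hx.sum_mul_edgeLoad_le hz.1, hz.sum_mul_edgeLoad_le hx.1]

lemma IsWardrop.convexComb (hw₁ : IsWardrop d c₁ x₁) (hw₂ : IsWardrop d c₂ x₂)
    (hnn₁ : ∀ e ∈ Eset, 0 ≤ c₁ e (edgeLoad x₁ e)) (hnn₂ : ∀ e ∈ Eset, 0 ≤ c₂ e (edgeLoad x₂ e))
    (hS : activeSupport Eset s c₁ (edgeLoad x₁) = activeSupport Eset s c₂ (edgeLoad x₂))
    {θ₁ θ₂ : ℝ} (hθ₁ : 0 ≤ θ₁) (hθ₂ : 0 ≤ θ₂) (hθ : θ₁ + θ₂ = 1)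
    (hcomb : ∀ e ∈ Eset, c e (θ₁ * edgeLoad x₁ e + θ₂ * edgeLoad x₂ e) =
      θ₁ * c₁ e (edgeLoad x₁ e) + θ₂ * c₂ e (edgeLoad x₂ e)) :
    IsWardrop d c fun i p => θ₁ * x₁ i p + θ₂ * x₂ i p := by
  refine ⟨hw₁.1.convexComb hw₂.1 hθ₁ hθ₂ hθ, fun i p hp q => ?_⟩
  have hshort : IsShortestPath Eset c (edgeLoad fun i p => θ₁ * x₁ i p + θ₂ * x₂ i p)
      (s i) (t i) p.1 := by
    have h₁₂ := isShortestPath_iff_of_activeSupport_eq hnn₁ hnn₂ hS (i := i) (l := p.1) (z := t i)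
    rw [edgeLoad_convexComb]
    have : 0 < x₁ i p ∨ 0 < x₂ i p := by
      by_contra! h
      nlinarith [hw₁.1.1 i p, hw₂.1.1 i p]
    rcases this with h | h
    · have h₁ := hw₁.isShortestPath h
      exact h₁.convexComb (h₁₂.1 h₁) hθ₁ hθ₂ hcomb
    · have h₂ := hw₂.isShortestPath h
      exact (h₁₂.2 h₂).convexComb h₂ hθ₁ hθ₂ hcomb
  exact hshort.2 q.1 q.2

end Flows

lemma convex_setOf_le_and_imp_lt (lo hi : ℝ) (P : Prop) :
    Convex ℝ {r : ℝ | lo ≤ r ∧ (P → r < hi)} := by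
  by_cases hP : P
  · rw [show {r : ℝ | lo ≤ r ∧ (P → r < hi)} = Set.Ico lo hi by ext; simp [hP]]
    exact convex_Ico lo hi
  · rw [show {r : ℝ | lo ≤ r ∧ (P → r < hi)} = Set.Ici lo by ext; simp [hP]]
    exact convex_Ici lo

lemma apply_convexComb_of_affineOn {P : Set ℝ} (hP : Convex ℝ P) {f : ℝ → ℝ → ℝ} {A B G : ℝ}
    (hf : ∀ lam, ∀ r ∈ P, f lam r = A * r + B + G * lam) {lam₁ lam₂ r₁ r₂ θ₁ θ₂ : ℝ}
    (h₁ : r₁ ∈ P) (h₂ : r₂ ∈ P) (hθ₁ : 0 ≤ θ₁) (hθ₂ : 0 ≤ θ₂) (hθ : θ₁ + θ₂ = 1) :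
    f (θ₁ * lam₁ + θ₂ * lam₂) (θ₁ * r₁ + θ₂ * r₂) = θ₁ * f lam₁ r₁ + θ₂ * f lam₂ r₂ := by
  have hr : θ₁ * r₁ + θ₂ * r₂ ∈ P := hP h₁ h₂ hθ₁ hθ₂ hθ
  rw [hf _ _ hr, hf _ _ h₁, hf _ _ h₂]
  linear_combination (-B) * hθ

theorem active_state_set_convex_general
    (Eset : Finset (V × V)) (s t : I → V) (d : I → ℝ)
    (K : ℕ) (σ : V × V → ℕ → ℝ) (a b : V × V → ℕ → ℝ) (ge : V × V → ℝ)
    (ha : ∀ e, ∀ k ≤ K, 0 < a e k) (hb : ∀ e, ∀ k ≤ K, 0 ≤ b e k)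
    (hge : ∀ e, 0 ≤ ge e)
    (c : ℝ → V × V → ℝ → ℝ)
    (hc : ∀ lam e k r, k ≤ K → σ e k ≤ r → (k < K → r < σ e (k + 1)) →
      c lam e r = a e k * r + b e k + ge e * lam)
    (hcmono : ∀ lam e, StrictMonoOn (c lam e) (Set.Ici 0))
    -- the (unique) equilibrium edge loads `λ ↦ x_e(λ)`:
    (xload : ℝ → V × V → ℝ)
    (hxload : ∀ lam, 0 ≤ lam →
      ∃ x : ∀ i, {l : List V // IsPath Eset (s i) (t i) l} → ℝ,
        IsWardrop d (c lam) x ∧ ∀ e, edgeLoad x e = xload lam e)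
    -- an arbitrary edge state `𝒮 = (S, ℓ)`:
    (S : Set (I × (V × V))) (ℓ : V × V → ℕ) :
    Convex ℝ {lam : ℝ | 0 ≤ lam ∧
      activeSupport Eset s (c lam) (xload lam) = S ∧
      ∀ e ∈ Eset, ℓ e ≤ K ∧ σ e (ℓ e) ≤ xload lam e ∧
        (ℓ e < K → xload lam e < σ e (ℓ e + 1))} := by
  have hpiece (e : V × V) :=
    convex_setOf_le_and_imp_lt (σ e (ℓ e)) (σ e (ℓ e + 1)) (ℓ e < K)
  have hnn {lam} (hlam : 0 ≤ lam) {x : ∀ i, {l : List V // IsPath Eset (s i) (t i) l} → ℝ}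
      (hx : IsWardrop d (c lam) x)
      (hℓ : ∀ e ∈ Eset, ℓ e ≤ K ∧ σ e (ℓ e) ≤ edgeLoad x e ∧
        (ℓ e < K → edgeLoad x e < σ e (ℓ e + 1)))
      (e) (he : e ∈ Eset) : 0 ≤ c lam e (edgeLoad x e) := by
    obtain ⟨hK, hlo, hhi⟩ := hℓ e he
    rw [hc lam e (ℓ e) _ hK hlo hhi]
    have := (ha e (ℓ e) hK).le; have := hb e (ℓ e) hK; have := hge e
    have := edgeLoad_nonneg hx.1.1 e
    positivity
  rw [convex_iff_pairwise_pos]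
  rintro lam₁ ⟨hlam₁, hS₁, hℓ₁⟩ lam₂ ⟨hlam₂, hS₂, hℓ₂⟩ - θ₁ θ₂ hθ₁ hθ₂ hθ
  obtain ⟨x₁, hw₁, hx₁⟩ := hxload lam₁ hlam₁
  obtain ⟨x₂, hw₂, hx₂⟩ := hxload lam₂ hlam₂
  obtain ⟨x, hw, hx⟩ := hxload (θ₁ * lam₁ + θ₂ * lam₂) (by positivity)
  rw [← funext hx₁] at hS₁ hℓ₁
  rw [← funext hx₂] at hS₂ hℓ₂
  have hcomb (e) (he : e ∈ Eset) :=
    apply_convexComb_of_affineOn (lam₁ := lam₁) (lam₂ := lam₂) (hpiece e)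
      (fun lam r hr => hc lam e (ℓ e) r (hℓ₁ e he).1 hr.1 hr.2) (hℓ₁ e he).2 (hℓ₂ e he).2
      hθ₁.le hθ₂.le hθ
  have hS := hS₁.trans hS₂.symm
  have hnn₁ := hnn hlam₁ hw₁ hℓ₁
  have hnn₂ := hnn hlam₂ hw₂ hℓ₂
  have hw' := hw₁.convexComb hw₂ hnn₁ hnn₂ hS hθ₁.le hθ₂.le hθ hcomb
  simp only [smul_eq_mul, Set.mem_ofPred_eq]
  rw [← funext hx, hw.edgeLoad_eq (hcmono _) hw', edgeLoad_convexComb]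
  refine ⟨by positivity, (activeSupport_convexComb hnn₁ hnn₂ hS hθ₁ hθ₂ hcomb).trans hS₁,
    fun e he => ⟨(hℓ₁ e he).1, hpiece e (hℓ₁ e he).2 (hℓ₂ e he).2 hθ₁.le hθ₂.le hθ⟩⟩

/-- for a single externality class and separable, piecewise affine,
continuous, strictly increasing edge cost functions, for every edge state
`𝒮 = (S, ℓ)` the set `Λ(𝒮)` of prices `λ ≥ 0` whose (unique) equilibrium edge loads
induce the active support `S` and the active function parts `ℓ` is convex. -/
theorem active_state_set_convex
    (Eset : Finset (V × V)) (s t : I → V) (d : I → ℝ) (hd : ∀ i, 0 < d i)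
    (hpaths : ∀ i, Nonempty {l : List V // IsPath Eset (s i) (t i) l})
    (K : ℕ) (σ : V × V → ℕ → ℝ) (a b : V × V → ℕ → ℝ) (ge : V × V → ℝ)
    (hσ0 : ∀ e, σ e 0 = 0) (hσmono : ∀ e, ∀ k < K, σ e k < σ e (k + 1))
    (ha : ∀ e, ∀ k ≤ K, 0 < a e k) (hb : ∀ e, ∀ k ≤ K, 0 ≤ b e k)
    (hge : ∀ e, 0 ≤ ge e)
    (c : ℝ → V × V → ℝ → ℝ)
    (hc : ∀ lam e k r, k ≤ K → σ e k ≤ r → (k < K → r < σ e (k + 1)) →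
      c lam e r = a e k * r + b e k + ge e * lam)
    (hccont : ∀ lam e, ContinuousOn (c lam e) (Set.Ici 0))
    (hcmono : ∀ lam e, StrictMonoOn (c lam e) (Set.Ici 0))
    -- the (unique) equilibrium edge loads `λ ↦ x_e(λ)`:
    (xload : ℝ → V × V → ℝ)
    (hxload : ∀ lam, 0 ≤ lam →
      ∃ x : ∀ i, {l : List V // IsPath Eset (s i) (t i) l} → ℝ,
        IsWardrop d (c lam) x ∧ ∀ e, edgeLoad x e = xload lam e)
    -- an arbitrary edge state `𝒮 = (S, ℓ)`:
    (S : Set (I × (V × V))) (ℓ : V × V → ℕ) :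
    Convex ℝ {lam : ℝ | 0 ≤ lam ∧
      activeSupport Eset s (c lam) (xload lam) = S ∧
      ∀ e ∈ Eset, ℓ e ≤ K ∧ σ e (ℓ e) ≤ xload lam e ∧
        (ℓ e < K → xload lam e < σ e (ℓ e + 1))} :=
  active_state_set_convex_general Eset s t d K σ a b ge ha hb hge c hc hcmono xload hxload S ℓ
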